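/- Let 𝔄₁ and 𝔄₂ be mutually commuting C*-subalgebras of a C*-algebra 𝔄 that are Schlieder independent. Then ‖A₁A₂‖ = ‖A₁‖·‖A₂‖ for all A₁ ∈ 𝔄₁ and A₂ ∈ 𝔄₂. -/

import Mathlib

/-!
Replacing `a, b` by `star a * a, star b * b` reduces the claim to positive `h₁ ∈ 𝔄₁`,
`h₂ ∈ 𝔄₂`. For `0 ≤ sᵢ < ‖hᵢ‖` the spectral cutoff `Eᵢ = (t ↦ max 0 (t - sᵢ))(hᵢ)` is
nonzero, positive and satisfies `sᵢ Eᵢ ≤ hᵢ Eᵢ`. Commuting positive elements have positive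
products, so `s₁ s₂ E₁E₂ ≤ h₁h₂ E₁E₂`, whence `s₁ s₂ ‖E₁E₂‖ ≤ ‖h₁h₂‖ ‖E₁E₂‖`. Schlieder
independence gives `E₁E₂ ≠ 0`, so `s₁ s₂ ≤ ‖h₁h₂‖`, and letting `sᵢ → ‖hᵢ‖` gives
`‖h₁‖ ‖h₂‖ ≤ ‖h₁h₂‖`.
-/

section

variable {A : Type*} [CStarAlgebra A] [PartialOrder A] [StarOrderedRing A]

lemma cfc_max_sub_smul_le_mul (h : A) (s : ℝ) :
    s • cfc (fun t ↦ max 0 (t - s)) h ≤ h * cfc (fun t ↦ max 0 (t - s)) h := by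
  by_cases hh : IsSelfAdjoint h
  · have hmul : h * cfc (fun t ↦ max 0 (t - s)) h = cfc (fun t ↦ t * max 0 (t - s)) h := by
      rw [cfc_mul (fun t : ℝ ↦ t) _ h, cfc_id' ℝ h]
    rw [hmul, ← cfc_const_mul ..]
    refine cfc_mono fun t _ ↦ ?_
    rcases le_total t s with hts | hts
    · simp [max_eq_left (sub_nonpos.2 hts)]
    · rw [max_eq_right (sub_nonneg.2 hts)]
      nlinarith
  · simp [cfc_apply_of_not_predicate h hh]

lemma cfc_max_sub_ne_zero {h : A} (h0 : 0 ≤ h) {s : ℝ} (hs0 : 0 ≤ s) (hs : s < ‖h‖) :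
    cfc (fun t ↦ max 0 (t - s)) h ≠ 0 := by
  have : Nontrivial A := nontrivial_of_ne h 0 (norm_pos_iff.1 (hs0.trans_lt hs))
  have := norm_apply_le_norm_cfc (fun t ↦ max 0 (t - s)) h
    (CStarAlgebra.norm_mem_spectrum_of_nonneg h0)
  intro he
  rw [he, norm_zero, Real.norm_of_nonneg (le_max_left _ _),
    max_eq_right (sub_nonneg.2 hs.le)] at this
  linarith

variable {S₁ S₂ : StarSubalgebra ℂ A}

lemma mul_le_mul_of_mem_of_commute (hcomm : ∀ a ∈ S₁, ∀ b ∈ S₂, a * b = b * a)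
    {a a' c c' : A} (ha : a ∈ S₁) (ha' : a' ∈ S₁) (hc : c ∈ S₂) (hc' : c' ∈ S₂)
    (ha0 : 0 ≤ a) (haa' : a ≤ a') (hc0 : 0 ≤ c) (hcc' : c ≤ c') :
    a * c ≤ a' * c' := by
  have h₁ : 0 ≤ (a' - a) * c' :=
    Commute.mul_nonneg (sub_nonneg.2 haa') (hc0.trans hcc') (hcomm _ (sub_mem ha' ha) _ hc')
  have h₂ : 0 ≤ a * (c' - c) :=
    Commute.mul_nonneg ha0 (sub_nonneg.2 hcc') (hcomm _ ha _ (sub_mem hc' hc))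
  rw [← sub_nonneg]
  convert add_nonneg h₁ h₂ using 1
  noncomm_ring

lemma norm_mul_norm_le_norm_mul_of_schlieder
    (hS₁ : IsClosed (S₁ : Set A)) (hS₂ : IsClosed (S₂ : Set A))
    (hcomm : ∀ a ∈ S₁, ∀ b ∈ S₂, a * b = b * a)
    (hSch : ∀ a ∈ S₁, ∀ b ∈ S₂, a ≠ 0 → b ≠ 0 → a * b ≠ 0)
    {h₁ h₂ : A} (h₁S : h₁ ∈ S₁) (h₂S : h₂ ∈ S₂) (h₁0 : 0 ≤ h₁) (h₂0 : 0 ≤ h₂) :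
    ‖h₁‖ * ‖h₂‖ ≤ ‖h₁ * h₂‖ := by
  refine mul_le_of_forall_lt_of_nonneg (norm_nonneg _) (norm_nonneg _)
    fun s₁ hs₁0 hs₁ s₂ hs₂0 hs₂ ↦ ?_
  set E₁ := cfc (fun t ↦ max 0 (t - s₁)) h₁
  set E₂ := cfc (fun t ↦ max 0 (t - s₂)) h₂
  have E₁S : E₁ ∈ S₁ := cfc_mem (hs := hS₁) _ h₁S
  have E₂S : E₂ ∈ S₂ := cfc_mem (hs := hS₂) _ h₂S
  have hE : 0 < ‖E₁ * E₂‖ := norm_pos_iff.2 <|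
    hSch _ E₁S _ E₂S (cfc_max_sub_ne_zero h₁0 hs₁0 hs₁) (cfc_max_sub_ne_zero h₂0 hs₂0 hs₂)
  have hs₁E₁ : 0 ≤ s₁ • E₁ := smul_nonneg hs₁0 (cfc_nonneg fun _ _ ↦ le_max_left _ _)
  have hs₂E₂ : 0 ≤ s₂ • E₂ := smul_nonneg hs₂0 (cfc_nonneg fun _ _ ↦ le_max_left _ _)
  have hle : (s₁ • E₁) * (s₂ • E₂) ≤ (h₁ * E₁) * (h₂ * E₂) :=
    mul_le_mul_of_mem_of_commute hcomm (S₁.smul_mem E₁S _) (mul_mem h₁S E₁S)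
      (S₂.smul_mem E₂S _) (mul_mem h₂S E₂S) hs₁E₁ (cfc_max_sub_smul_le_mul h₁ s₁) hs₂E₂
      (cfc_max_sub_smul_le_mul h₂ s₂)
  refine le_of_mul_le_mul_right ?_ hE
  calc s₁ * s₂ * ‖E₁ * E₂‖ = ‖(s₁ • E₁) * (s₂ • E₂)‖ := by
        rw [smul_mul_smul_comm, norm_smul, Real.norm_of_nonneg (mul_nonneg hs₁0 hs₂0)]
    _ ≤ ‖(h₁ * E₁) * (h₂ * E₂)‖ :=
        CStarAlgebra.norm_le_norm_of_nonneg_of_le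
          (Commute.mul_nonneg hs₁E₁ hs₂E₂ (hcomm _ (S₁.smul_mem E₁S _) _ (S₂.smul_mem E₂S _))) hle
    _ = ‖(h₁ * h₂) * (E₁ * E₂)‖ := by
        rw [mul_assoc, ← mul_assoc E₁, hcomm _ E₁S _ h₂S, mul_assoc, mul_assoc]
    _ ≤ ‖h₁ * h₂‖ * ‖E₁ * E₂‖ := norm_mul_le _ _

end

theorem norm_mul_of_schlieder {A : Type*} [NormedRing A] [StarRing A] [CStarRing A]
    [NormedAlgebra ℂ A] [StarModule ℂ A] [CompleteSpace A]
    (S₁ S₂ : StarSubalgebra ℂ A)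
    (hS₁ : IsClosed (S₁ : Set A)) (hS₂ : IsClosed (S₂ : Set A))
    (hcomm : ∀ a ∈ S₁, ∀ b ∈ S₂, a * b = b * a)
    (hSch : ∀ a ∈ S₁, ∀ b ∈ S₂, a ≠ 0 → b ≠ 0 → a * b ≠ 0) :
    ∀ a ∈ S₁, ∀ b ∈ S₂, ‖a * b‖ = ‖a‖ * ‖b‖ := by
  let : CStarAlgebra A := ⟨⟩
  let : PartialOrder A := CStarAlgebra.spectralOrder A
  let : StarOrderedRing A := CStarAlgebra.spectralOrderedRing A
  intro a ha b hb
  have haa : star a * a ∈ S₁ := mul_mem (star_mem ha) ha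
  have hbb : star b * b ∈ S₂ := mul_mem (star_mem hb) hb
  have hstar : star (a * b) * (a * b) = (star a * a) * (star b * b) := by
    rw [star_mul, show star b * star a * (a * b) = star b * (star a * a) * b by noncomm_ring,
      ← hcomm _ haa _ (star_mem hb), mul_assoc (star a * a)]
  have hsq : ‖a‖ * ‖b‖ * (‖a‖ * ‖b‖) ≤ ‖a * b‖ * ‖a * b‖ := by
    have := norm_mul_norm_le_norm_mul_of_schlieder hS₁ hS₂ hcomm hSch haa hbb
      (star_mul_self_nonneg a) (star_mul_self_nonneg b)
    rwa [CStarRing.norm_star_mul_self, CStarRing.norm_star_mul_self, ← hstar,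
      CStarRing.norm_star_mul_self, mul_mul_mul_comm] at this
  exact le_antisymm (norm_mul_le a b)
    ((mul_self_le_mul_self_iff (by positivity) (norm_nonneg _)).2 hsq)
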